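/- In the unit ball model 𝔹³ of hyperbolic space with metric ρ, for any z, w ∈ 𝔹³: |z − w| ≤ 2(e^{−ρ(0,z)} + e^{−ρ(0,w)})·sinh(ρ(z,w)/2). -/

import Mathlib

/-- The hyperbolic metric on the unit ball model `𝔹³`, via the standard formula
`sinh (ρ(z,w)/2) = |z - w| / √((1-|z|²)(1-|w|²))`. -/
noncomputable def rhoB (z w : EuclideanSpace ℝ (Fin 3)) : ℝ :=
  2 * Real.arsinh (‖z - w‖ / Real.sqrt ((1 - ‖z‖ ^ 2) * (1 - ‖w‖ ^ 2)))

lemma exp_neg_rho_aux (t : ℝ) (h0 : 0 ≤ t) (h1 : t < 1) :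
    Real.exp (-(2 * Real.arsinh (t / Real.sqrt (1 - t ^ 2)))) = (1 - t) / (1 + t) := by
  have hpos : (0:ℝ) < 1 - t ^ 2 := by nlinarith
  have hs : Real.sqrt (1 - t ^ 2) > 0 := Real.sqrt_pos.mpr hpos
  set a := t / Real.sqrt (1 - t ^ 2) with ha
  have h1a : 1 + a ^ 2 = 1 / (1 - t ^ 2) := by
    rw [ha, div_pow, Real.sq_sqrt hpos.le]
    field_simp
    ring
  have hsq : Real.sqrt (1 + a ^ 2) = 1 / Real.sqrt (1 - t ^ 2) := by
    rw [h1a, Real.sqrt_div' 1 hpos.le]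
    simp
  have hexp : Real.exp (Real.arsinh a) = (t + 1) / Real.sqrt (1 - t ^ 2) := by
    rw [Real.exp_arsinh, hsq, ha]
    field_simp
  have : Real.exp (-(2 * Real.arsinh a)) = (Real.exp (Real.arsinh a))⁻¹ ^ 2 := by
    rw [← Real.exp_neg, ← Real.exp_nat_mul]
    ring_nf
  rw [this, hexp]
  have h1t : (0:ℝ) < 1 + t := by linarith
  rw [inv_div, div_pow, Real.sq_sqrt hpos.le]
  rw [show (1 : ℝ) - t ^ 2 = (1 - t) * (1 + t) by ring]
  field_simp
  ring

/-- In the unit ball model, for any `z, w ∈ 𝔹³`: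
`|z - w| ≤ 2 (e^{-ρ(0,z)} + e^{-ρ(0,w)}) sinh (ρ(z,w)/2)`. -/
theorem stmt15 (z w : EuclideanSpace ℝ (Fin 3)) (hz : ‖z‖ < 1) (hw : ‖w‖ < 1) :
    ‖z - w‖ ≤ 2 * (Real.exp (-(rhoB 0 z)) + Real.exp (-(rhoB 0 w))) *
      Real.sinh (rhoB z w / 2) := by
  set x := 1 - ‖z‖ ^ 2 with hx
  set y := 1 - ‖w‖ ^ 2 with hy
  have hxp : (0:ℝ) < x := by have := norm_nonneg z; nlinarith
  have hyp : (0:ℝ) < y := by have := norm_nonneg w; nlinarith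
  have hS : (0:ℝ) < Real.sqrt (x * y) := Real.sqrt_pos.mpr (mul_pos hxp hyp)
  have hsinh : Real.sinh (rhoB z w / 2) = ‖z - w‖ / Real.sqrt (x * y) := by
    rw [rhoB]
    rw [show 2 * Real.arsinh (‖z - w‖ / Real.sqrt (x * y)) / 2
        = Real.arsinh (‖z - w‖ / Real.sqrt (x * y)) by ring]
    exact Real.sinh_arsinh _
  -- compute exponentials
  have hez : Real.exp (-(rhoB 0 z)) = (1 - ‖z‖) / (1 + ‖z‖) := by
    have : rhoB 0 z = 2 * Real.arsinh (‖z‖ / Real.sqrt (1 - ‖z‖ ^ 2)) := by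
      simp [rhoB, norm_sub_rev]
    rw [this]
    exact exp_neg_rho_aux _ (norm_nonneg z) hz
  have hew : Real.exp (-(rhoB 0 w)) = (1 - ‖w‖) / (1 + ‖w‖) := by
    have : rhoB 0 w = 2 * Real.arsinh (‖w‖ / Real.sqrt (1 - ‖w‖ ^ 2)) := by
      simp [rhoB, norm_sub_rev]
    rw [this]
    exact exp_neg_rho_aux _ (norm_nonneg w) hw
  -- key: sqrt (x*y) ≤ 2 * (e^{-ρz} + e^{-ρw})
  have hzb : x / 4 ≤ (1 - ‖z‖) / (1 + ‖z‖) := by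
    rw [div_le_div_iff₀ (by norm_num) (by have := norm_nonneg z; linarith)]
    have := norm_nonneg z
    nlinarith
  have hwb : y / 4 ≤ (1 - ‖w‖) / (1 + ‖w‖) := by
    rw [div_le_div_iff₀ (by norm_num) (by have := norm_nonneg w; linarith)]
    have := norm_nonneg w
    nlinarith
  have hamgm : Real.sqrt (x * y) ≤ (x + y) / 2 := by
    have h2 : 2 * Real.sqrt x * Real.sqrt y ≤ x + y := by
      have := two_mul_le_add_sq (Real.sqrt x) (Real.sqrt y)
      rwa [Real.sq_sqrt hxp.le, Real.sq_sqrt hyp.le] at this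
    rw [Real.sqrt_mul hxp.le]
    linarith
  have hkey : Real.sqrt (x * y) ≤ 2 * (Real.exp (-(rhoB 0 z)) + Real.exp (-(rhoB 0 w))) := by
    rw [hez, hew]
    calc Real.sqrt (x * y) ≤ (x + y) / 2 := hamgm
      _ = 2 * (x / 4 + y / 4) := by ring
      _ ≤ 2 * ((1 - ‖z‖) / (1 + ‖z‖) + (1 - ‖w‖) / (1 + ‖w‖)) := by linarith
  rw [hsinh]
  rw [← sub_nonneg]
  have : 2 * (Real.exp (-(rhoB 0 z)) + Real.exp (-(rhoB 0 w))) * (‖z - w‖ / Real.sqrt (x * y))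
      - ‖z - w‖ = (2 * (Real.exp (-(rhoB 0 z)) + Real.exp (-(rhoB 0 w))) - Real.sqrt (x * y))
      * (‖z - w‖ / Real.sqrt (x * y)) := by
    field_simp
  rw [this]
  exact mul_nonneg (by linarith) (div_nonneg (norm_nonneg _) hS.le)
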